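/- arXiv:1910.12365 — 3 statements merged into one kernel-verified Lean document; each statement's English description precedes it below -/
import Mathlib

section
/- Let G and H be groups, K a subgroup of G, and let (E, f, z₀) and (E', f', z₀') be set-level homogeneous principal H-bundles over G ⧸ K with base points, with associated maps η : K → H and η' : K → H respectively. If η(k) = η'(k) for all k ∈ K, then there exists a bijection δ : E → E' satisfying δ(g • z) = g • δ(z) for all g ∈ G and z ∈ E, δ(z • h) = δ(z) • h for all h ∈ H and z ∈ E, f' ∘ δ = f, and δ(z₀) = z₀'. -/
/-- A set-level homogeneous principal `H`-bundle over `G ⧸ K`: a type `E` with a left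
`G`-action and a right `H`-action `r` that commute, together with a `G`-equivariant
projection `f : E → G ⧸ K` whose fibers are preserved by the `H`-action, with the
`H`-action free and transitive on each fiber of `f`. -/
structure SetHomogeneousBundle (G H : Type*) [Group G] [Group H] (K : Subgroup G)
    (E : Type*) [MulAction G E] where
  /-- the right action of `H` on `E` -/
  r : E → H → E
  r_one : ∀ z : E, r z 1 = z
  r_mul : ∀ (z : E) (h h' : H), r (r z h) h' = r z (h * h')
  /-- the actions of `G` and `H` commute -/
  smul_comm : ∀ (g : G) (z : E) (h : H), g • r z h = r (g • z) h
  /-- the bundle projection -/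
  f : E → G ⧸ K
  /-- the projection is `G`-equivariant -/
  f_smul : ∀ (g : G) (z : E), f (g • z) = g • f z
  /-- the right `H`-action preserves each fiber of `f` -/
  f_r : ∀ (z : E) (h : H), f (r z h) = f z
  /-- the right `H`-action is free -/
  free : ∀ (z : E) (h : H), r z h = z → h = 1
  /-- `H` acts transitively on each fiber of `f` -/
  trans : ∀ z z' : E, f z = f z' → ∃ h : H, z' = r z h

section Aux
variable {G H : Type*} [Group G] [Group H] {K : Subgroup G}

theorem SHB.smul_mk (g g' : G) :
    g • (QuotientGroup.mk g' : G ⧸ K) = QuotientGroup.mk (g * g') := rfl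

theorem SHB.rep {E : Type*} [MulAction G E] (B : SetHomogeneousBundle G H K E)
    (z₀ : E) (hz₀ : B.f z₀ = ((1 : G) : G ⧸ K)) (z : E) :
    ∃ gh : G × H, z = gh.1 • B.r z₀ gh.2 := by
  obtain ⟨g, hg⟩ := Quotient.exists_rep (B.f z)
  have h1 : B.f z₀ = B.f (g⁻¹ • z) := by
    rw [B.f_smul, ← hg, hz₀]
    show _ = g⁻¹ • (QuotientGroup.mk g : G ⧸ K)
    rw [SHB.smul_mk, inv_mul_cancel]
  obtain ⟨h, hh⟩ := B.trans _ _ h1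
  exact ⟨(g, h), by rw [← hh, smul_inv_smul]⟩

theorem SHB.key {E E' : Type*} [MulAction G E] [MulAction G E']
    (B : SetHomogeneousBundle G H K E) (B' : SetHomogeneousBundle G H K E')
    (z₀ : E) (hz₀ : B.f z₀ = ((1 : G) : G ⧸ K)) (z₀' : E')
    (η : K → H) (hη : ∀ k : K, (k : G) • z₀ = B.r z₀ (η k))
    (hη' : ∀ k : K, (k : G) • z₀' = B'.r z₀' (η k))
    (g g' : G) (h h' : H) (hgh : g • B.r z₀ h = g' • B.r z₀ h') :
    g • B'.r z₀' h = g' • B'.r z₀' h' := by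
  have hf : QuotientGroup.mk g = (QuotientGroup.mk g' : G ⧸ K) := by
    have := congrArg B.f hgh
    rw [B.f_smul, B.f_smul, B.f_r, B.f_r, hz₀] at this
    rw [SHB.smul_mk, SHB.smul_mk, mul_one, mul_one] at this
    exact this
  have hk : g'⁻¹ * g ∈ K := QuotientGroup.eq.mp hf.symm
  set k : K := ⟨g'⁻¹ * g, hk⟩ with hkdef
  have h2 : B.r z₀ (η k * h) = B.r z₀ h' := by
    have := congrArg (fun z => g'⁻¹ • z) hgh
    simp only [inv_smul_smul] at this
    rw [← mul_smul] at this
    calc B.r z₀ (η k * h) = B.r (B.r z₀ (η k)) h := (B.r_mul _ _ _).symm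
      _ = B.r ((k : G) • z₀) h := by rw [hη]
      _ = (k : G) • B.r z₀ h := (B.smul_comm _ _ _).symm
      _ = B.r z₀ h' := this
  have h3 : η k * h = h' := by
    have : B.r z₀ (η k * h * h'⁻¹) = z₀ := by
      rw [← B.r_mul, h2, B.r_mul, mul_inv_cancel, B.r_one]
    exact mul_inv_eq_one.mp (B.free _ _ this)
  calc g • B'.r z₀' h = (g' * (k : G)) • B'.r z₀' h := by
        rw [hkdef]; simp [mul_inv_cancel_left]
    _ = g' • ((k : G) • B'.r z₀' h) := by rw [mul_smul]
    _ = g' • B'.r ((k : G) • z₀') h := by rw [B'.smul_comm]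
    _ = g' • B'.r (B'.r z₀' (η k)) h := by rw [hη']
    _ = g' • B'.r z₀' (η k * h) := by rw [B'.r_mul]
    _ = g' • B'.r z₀' h' := by rw [h3]

end Aux

/-- If two based set-level homogeneous principal `H`-bundles over `G ⧸ K` have equal
associated maps `η = η' : K → H`, then there is a `G`- and `H`-equivariant bijection
between them, commuting with the projections and taking base point to base point. -/
theorem stmt5 {G H E E' : Type*} [Group G] [Group H] (K : Subgroup G)
    [MulAction G E] [MulAction G E']
    (B : SetHomogeneousBundle G H K E) (B' : SetHomogeneousBundle G H K E')
    (z₀ : E) (hz₀ : B.f z₀ = ((1 : G) : G ⧸ K))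
    (z₀' : E') (hz₀' : B'.f z₀' = ((1 : G) : G ⧸ K))
    (η : K → H) (hη : ∀ k : K, (k : G) • z₀ = B.r z₀ (η k))
    (η' : K → H) (hη' : ∀ k : K, (k : G) • z₀' = B'.r z₀' (η' k))
    (heq : ∀ k : K, η k = η' k) :
    ∃ δ : E → E', Function.Bijective δ ∧
      (∀ (g : G) (z : E), δ (g • z) = g • δ z) ∧
      (∀ (z : E) (h : H), δ (B.r z h) = B'.r (δ z) h) ∧
      (∀ z : E, B'.f (δ z) = B.f z) ∧
      δ z₀ = z₀' := by
  classical
  have hη'2 : ∀ k : K, (k : G) • z₀' = B'.r z₀' (η k) := fun k => by rw [heq]; exact hη' k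
  set δ : E → E' := fun z =>
    (SHB.rep B z₀ hz₀ z).choose.1 • B'.r z₀' (SHB.rep B z₀ hz₀ z).choose.2 with hδ
  have hrep : ∀ z : E, z = (SHB.rep B z₀ hz₀ z).choose.1 • B.r z₀ (SHB.rep B z₀ hz₀ z).choose.2 :=
    fun z => (SHB.rep B z₀ hz₀ z).choose_spec
  have hchar : ∀ (z : E) (g : G) (h : H), z = g • B.r z₀ h → δ z = g • B'.r z₀' h := by
    intro z g h hz
    exact SHB.key B B' z₀ hz₀ z₀' η hη hη'2 _ g _ h (by rw [← hrep z, hz])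
  set δ' : E' → E := fun z =>
    (SHB.rep B' z₀' hz₀' z).choose.1 • B.r z₀ (SHB.rep B' z₀' hz₀' z).choose.2 with hδ'
  have hrep' : ∀ z : E',
      z = (SHB.rep B' z₀' hz₀' z).choose.1 • B'.r z₀' (SHB.rep B' z₀' hz₀' z).choose.2 :=
    fun z => (SHB.rep B' z₀' hz₀' z).choose_spec
  have hchar' : ∀ (z : E') (g : G) (h : H), z = g • B'.r z₀' h → δ' z = g • B.r z₀ h := by
    intro z g h hz
    exact SHB.key B' B z₀' hz₀' z₀ η hη'2 hη _ g _ h (by rw [← hrep' z, hz])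
  have hli : Function.LeftInverse δ' δ := by
    intro z
    rw [hchar z _ _ (hrep z), hchar' _ _ _ rfl]
    exact (hrep z).symm
  have hri : Function.RightInverse δ' δ := by
    intro z
    rw [hchar' z _ _ (hrep' z), hchar _ _ _ rfl]
    exact (hrep' z).symm
  refine ⟨δ, ⟨hli.injective, hri.surjective⟩, ?_, ?_, ?_, ?_⟩
  · intro g z
    rw [hchar z _ _ (hrep z), hchar (g • z) (g * (SHB.rep B z₀ hz₀ z).choose.1)
      (SHB.rep B z₀ hz₀ z).choose.2 (by rw [mul_smul, ← hrep z]), mul_smul]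
  · intro z h
    obtain ⟨⟨g, h₁⟩, hz⟩ := SHB.rep B z₀ hz₀ z
    rw [hchar z g h₁ hz, hchar (B.r z h) g (h₁ * h)
      (by rw [hz, ← B.smul_comm, B.r_mul]), ← B'.r_mul, B'.smul_comm]
  · intro z
    obtain ⟨⟨g, h⟩, hz⟩ := SHB.rep B z₀ hz₀ z
    rw [hchar z g h hz, hz, B'.f_smul, B.f_smul, B'.f_r, B.f_r, hz₀, hz₀']
  · rw [hchar z₀ 1 1 (by rw [B.r_one, one_smul]), B'.r_one, one_smul]
end

section
/- Let G and H be groups, K a subgroup of G, and let (E, f, z₀) and (E', f', z₀') be set-level homogeneous principal H-bundles over G ⧸ K with base points, with associated maps η : K → H and η' : K → H respectively. Suppose δ : E → E' is a map satisfying δ(g • z) = g • δ(z) for all g ∈ G and z ∈ E, δ(z • h) = δ(z) • h for all h ∈ H and z ∈ E, and f' ∘ δ = f. Then there exists h₀ ∈ H such that η'(k) = h₀⁻¹ · η(k) · h₀ for all k ∈ K. -/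
/-- If `δ` is a `G`- and `H`-equivariant map between two based set-level homogeneous
principal `H`-bundles over `G ⧸ K` commuting with the projections, then the associated
maps `η, η' : K → H` are conjugate by some `h₀ ∈ H`. -/
theorem stmt7 {G H E E' : Type*} [Group G] [Group H] (K : Subgroup G)
    [MulAction G E] [MulAction G E']
    (B : SetHomogeneousBundle G H K E) (B' : SetHomogeneousBundle G H K E')
    (z₀ : E) (hz₀ : B.f z₀ = ((1 : G) : G ⧸ K))
    (z₀' : E') (hz₀' : B'.f z₀' = ((1 : G) : G ⧸ K))
    (η : K → H) (hη : ∀ k : K, (k : G) • z₀ = B.r z₀ (η k))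
    (η' : K → H) (hη' : ∀ k : K, (k : G) • z₀' = B'.r z₀' (η' k))
    (δ : E → E')
    (hδG : ∀ (g : G) (z : E), δ (g • z) = g • δ z)
    (hδH : ∀ (z : E) (h : H), δ (B.r z h) = B'.r (δ z) h)
    (hδf : ∀ z : E, B'.f (δ z) = B.f z) :
    ∃ h₀ : H, ∀ k : K, η' k = h₀⁻¹ * η k * h₀ := by
  obtain ⟨h₀, hh₀⟩ := B'.trans z₀' (δ z₀) (by rw [hδf, hz₀, hz₀'])
  refine ⟨h₀⁻¹, fun k => ?_⟩
  have key : B'.r z₀' (η' k * h₀) = B'.r z₀' (h₀ * η k) := by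
    rw [← B'.r_mul, ← hη', ← B'.smul_comm, ← hh₀, ← hδG, hη, hδH, hh₀, B'.r_mul]
  have : (η' k * h₀) * (h₀ * η k)⁻¹ = 1 := by
    apply B'.free z₀'
    rw [← B'.r_mul, key, B'.r_mul, mul_inv_cancel, B'.r_one]
  have heq : η' k * h₀ = h₀ * η k := by
    have := mul_eq_one_iff_eq_inv.mp this
    rwa [inv_inv] at this
  rw [inv_inv, ← heq, mul_assoc, mul_inv_cancel, mul_one]
end

section
/- Let G and H be groups, K a subgroup of G, and let (E, f, z₀) and (E', f', z₀') be set-level homogeneous principal H-bundles over G ⧸ K with base points, with associated maps η : K → H and η' : K → H respectively. If there exists h₀ ∈ H such that η'(k) = h₀⁻¹ · η(k) · h₀ for all k ∈ K, then there exists a bijection δ : E → E' satisfying δ(g • z) = g • δ(z) for all g ∈ G and z ∈ E, δ(z • h) = δ(z) • h for all h ∈ H and z ∈ E, and f' ∘ δ = f. -/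
lemma decomp_iff {G H E : Type*} [Group G] [Group H] {K : Subgroup G} [MulAction G E]
    (B : SetHomogeneousBundle G H K E) (z₀ : E) (hz₀ : B.f z₀ = ((1 : G) : G ⧸ K))
    (η : K → H) (hη : ∀ k : K, (k : G) • z₀ = B.r z₀ (η k))
    (g g' : G) (h h' : H) :
    g • B.r z₀ h = g' • B.r z₀ h' ↔ ∃ k : K, g = g' * k ∧ h' = η k * h := by
  constructor
  · intro heq
    have hf : g⁻¹ * g' ∈ K := by
      have := congrArg B.f heq
      simp only [B.f_smul, B.f_r, hz₀] at this
      rw [show ((1 : G) : G ⧸ K) = QuotientGroup.mk 1 from rfl, MulAction.Quotient.smul_mk, MulAction.Quotient.smul_mk, QuotientGroup.eq] at this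
      simpa using this
    have hk : g'⁻¹ * g ∈ K := by simpa using K.inv_mem hf
    refine ⟨⟨g'⁻¹ * g, hk⟩, by group, ?_⟩
    have h2 : (g'⁻¹ * g) • B.r z₀ h = B.r z₀ h' := by
      rw [mul_smul, heq, ← mul_smul, inv_mul_cancel, one_smul]
    rw [B.smul_comm, hη ⟨g'⁻¹ * g, hk⟩, B.r_mul] at h2
    have h3 : B.r z₀ (η ⟨g'⁻¹ * g, hk⟩ * h * h'⁻¹) = z₀ := by
      rw [← B.r_mul, h2, B.r_mul, mul_inv_cancel, B.r_one]
    exact (mul_inv_eq_one.mp (B.free _ _ h3)).symm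
  · rintro ⟨k, rfl, rfl⟩
    rw [mul_smul, ← B.r_mul, B.smul_comm, hη]

lemma exists_decomp {G H E : Type*} [Group G] [Group H] {K : Subgroup G} [MulAction G E]
    (B : SetHomogeneousBundle G H K E) (z₀ : E) (hz₀ : B.f z₀ = ((1 : G) : G ⧸ K))
    (z : E) : ∃ g : G, ∃ h : H, z = g • B.r z₀ h := by
  obtain ⟨g, hg⟩ := QuotientGroup.mk_surjective (B.f z)
  have hfib : B.f z₀ = B.f (g⁻¹ • z) := by
    rw [B.f_smul, ← hg, hz₀]
    rw [show ((1 : G) : G ⧸ K) = QuotientGroup.mk 1 from rfl,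
      MulAction.Quotient.smul_mk]
    simp
  obtain ⟨h, hh⟩ := B.trans z₀ (g⁻¹ • z) hfib
  exact ⟨g, h, by rw [← hh, smul_inv_smul]⟩

/-- If the associated maps `η, η' : K → H` of two based set-level homogeneous principal
`H`-bundles over `G ⧸ K` are conjugate by some `h₀ ∈ H`, then there is a `G`- and
`H`-equivariant bijection between the bundles commuting with the projections. -/
theorem stmt8 {G H E E' : Type*} [Group G] [Group H] (K : Subgroup G)
    [MulAction G E] [MulAction G E']
    (B : SetHomogeneousBundle G H K E) (B' : SetHomogeneousBundle G H K E')
    (z₀ : E) (hz₀ : B.f z₀ = ((1 : G) : G ⧸ K))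
    (z₀' : E') (hz₀' : B'.f z₀' = ((1 : G) : G ⧸ K))
    (η : K → H) (hη : ∀ k : K, (k : G) • z₀ = B.r z₀ (η k))
    (η' : K → H) (hη' : ∀ k : K, (k : G) • z₀' = B'.r z₀' (η' k))
    (hconj : ∃ h₀ : H, ∀ k : K, η' k = h₀⁻¹ * η k * h₀) :
    ∃ δ : E → E', Function.Bijective δ ∧
      (∀ (g : G) (z : E), δ (g • z) = g • δ z) ∧
      (∀ (z : E) (h : H), δ (B.r z h) = B'.r (δ z) h) ∧
      (∀ z : E, B'.f (δ z) = B.f z) := by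
  obtain ⟨h₀, hc⟩ := hconj
  -- transfer lemmas
  have transfer : ∀ (g g' : G) (h h' : H), g • B.r z₀ h = g' • B.r z₀ h' →
      g • B'.r z₀' (h₀⁻¹ * h) = g' • B'.r z₀' (h₀⁻¹ * h') := by
    intro g g' h h' heq
    obtain ⟨k, hk1, hk2⟩ := (decomp_iff B z₀ hz₀ η hη g g' h h').mp heq
    refine (decomp_iff B' z₀' hz₀' η' hη' g g' _ _).mpr ⟨k, hk1, ?_⟩
    rw [hc k, hk2]; group
  have transfer' : ∀ (g g' : G) (h h' : H),
      g • B'.r z₀' (h₀⁻¹ * h) = g' • B'.r z₀' (h₀⁻¹ * h') →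
      g • B.r z₀ h = g' • B.r z₀ h' := by
    intro g g' h h' heq
    obtain ⟨k, hk1, hk2⟩ := (decomp_iff B' z₀' hz₀' η' hη' g g' _ _).mp heq
    refine (decomp_iff B z₀ hz₀ η hη g g' h h').mpr ⟨k, hk1, ?_⟩
    rw [hc k] at hk2
    have : h' = h₀ * (h₀⁻¹ * η k * h₀ * (h₀⁻¹ * h)) := by
      rw [← hk2]; group
    rw [this]; group
  choose gz hz hdec using fun z => exists_decomp B z₀ hz₀ z
  set δ : E → E' := fun z => gz z • B'.r z₀' (h₀⁻¹ * hz z) with hδ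
  have key : ∀ (z : E) (g : G) (h : H), z = g • B.r z₀ h →
      δ z = g • B'.r z₀' (h₀⁻¹ * h) := by
    intro z g h hzgh
    exact transfer _ _ _ _ (by rw [← hdec z, hzgh])
  refine ⟨δ, ⟨?_, ?_⟩, ?_, ?_, ?_⟩
  · -- injective
    intro z w hzw
    rw [key z (gz z) (hz z) (hdec z), key w (gz w) (hz w) (hdec w)] at hzw
    rw [hdec z, hdec w]
    exact transfer' _ _ _ _ hzw
  · -- surjective
    intro w
    obtain ⟨g, h, hw⟩ := exists_decomp B' z₀' hz₀' w
    refine ⟨g • B.r z₀ (h₀ * h), ?_⟩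
    rw [key _ g (h₀ * h) rfl, hw, inv_mul_cancel_left]
  · -- G-equivariance
    intro g z
    rw [key (g • z) (g * gz z) (hz z) (by rw [mul_smul, ← hdec z]),
      key z (gz z) (hz z) (hdec z), mul_smul]
  · -- H-equivariance
    intro z h
    have side : B.r z h = gz z • B.r z₀ (hz z * h) := by
      conv_lhs => rw [hdec z]
      rw [← B.smul_comm, B.r_mul]
    rw [key (B.r z h) (gz z) (hz z * h) side,
      key z (gz z) (hz z) (hdec z), ← B'.smul_comm, B'.r_mul, mul_assoc]
  · -- projection
    intro z
    rw [key z (gz z) (hz z) (hdec z), B'.f_smul, B'.f_r, hz₀']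
    conv_rhs => rw [hdec z]
    rw [B.f_smul, B.f_r, hz₀]
end
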